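/- (Depth needed for numerical indistinguishability.) Let κ be a kernel map with a_0 > 0 and 0 < κ'(1) < 1, where κ'(1) = ∑_{k=1}^∞ k a_k. Let ε ∈ (0,1). Then for every ρ_0 ∈ (-1,1) and every ℓ ≥ ln(1/ε)/ln(1/κ'(1)), the kernel sequence satisfies |ρ_ℓ - 1| ≤ ε · |ρ_0 - 1|. -/
import Mathlib


/-- The kernel map associated to nonnegative coefficients `a`. -/
noncomputable def kernelMap (a : ℕ → ℝ) (ρ : ℝ) : ℝ := ∑' k, a k * ρ ^ k

set_option maxHeartbeats 1000000 in
lemma abs_pow_sub_one_le (x : ℝ) (hx : |x| ≤ 1) (k : ℕ) :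
    |x ^ k - 1| ≤ k * |x - 1| := by
  rw [← geom_sum_mul, abs_mul]
  gcongr
  calc |∑ i ∈ Finset.range k, x ^ i| ≤ ∑ i ∈ Finset.range k, |x ^ i| :=
        Finset.abs_sum_le_sum_abs _ _
    _ ≤ ∑ i ∈ Finset.range k, 1 := by
        refine Finset.sum_le_sum fun i _ => ?_
        rw [abs_pow]
        exact pow_le_one₀ (abs_nonneg x) hx
    _ = k := by simp

lemma abs_tsum_le' (f : ℕ → ℝ) (h : Summable f) : |∑' k, f k| ≤ ∑' k, |f k| := by
  have h2 : Summable fun k => ‖f k‖ := by simpa [Real.norm_eq_abs] using h.abs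
  have := norm_tsum_le_tsum_norm h2
  simpa [Real.norm_eq_abs] using this

lemma summable_aux (a : ℕ → ℝ) (ha : ∀ k, 0 ≤ a k) (hsum : HasSum a 1)
    (x : ℝ) (hx : |x| ≤ 1) : Summable (fun k => a k * x ^ k) := by
  refine Summable.of_norm ?_
  refine hsum.summable.of_nonneg_of_le (fun k => norm_nonneg _) (fun k => ?_)
  rw [Real.norm_eq_abs, abs_mul, abs_of_nonneg (ha k), abs_pow]
  calc a k * |x| ^ k ≤ a k * 1 := by
        exact mul_le_mul_of_nonneg_left (pow_le_one₀ (abs_nonneg x) hx) (ha k)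
    _ = a k := mul_one _

lemma key_step (a : ℕ → ℝ) (ha : ∀ k, 0 ≤ a k) (hsum : HasSum a 1)
    (hd : Summable (fun k : ℕ => (k : ℝ) * a k))
    (x : ℝ) (hx : |x| ≤ 1) :
    |kernelMap a x - 1| ≤ (∑' k : ℕ, (k : ℝ) * a k) * |x - 1| ∧ |kernelMap a x| ≤ 1 := by
  have hs := summable_aux a ha hsum x hx
  constructor
  · have h1 : kernelMap a x - 1 = ∑' k, (a k * x ^ k - a k) := by
      rw [kernelMap, ← hsum.tsum_eq, ← Summable.tsum_sub hs hsum.summable]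
    rw [h1]
    have hsub : Summable (fun k => a k * x ^ k - a k) := hs.sub hsum.summable
    have hrhs : Summable (fun k : ℕ => (k : ℝ) * a k * |x - 1|) := hd.mul_right _
    have hbound : ∀ k : ℕ, |a k * x ^ k - a k| ≤ (k : ℝ) * a k * |x - 1| := by
      intro k
      have : a k * x ^ k - a k = a k * (x ^ k - 1) := by ring
      rw [this, abs_mul, abs_of_nonneg (ha k)]
      calc a k * |x ^ k - 1| ≤ a k * ((k : ℝ) * |x - 1|) :=
            mul_le_mul_of_nonneg_left (abs_pow_sub_one_le x hx k) (ha k)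
        _ = (k : ℝ) * a k * |x - 1| := by ring
    calc |∑' k, (a k * x ^ k - a k)| ≤ ∑' k, |a k * x ^ k - a k| := by
          exact abs_tsum_le' _ hsub
      _ ≤ ∑' k : ℕ, (k : ℝ) * a k * |x - 1| := by
          refine Summable.tsum_le_tsum hbound (hsub.abs) hrhs
      _ = (∑' k : ℕ, (k : ℝ) * a k) * |x - 1| := tsum_mul_right
  · calc |kernelMap a x| ≤ ∑' k, |a k * x ^ k| := abs_tsum_le' _ hs
      _ ≤ ∑' k, a k := by
          refine Summable.tsum_le_tsum (fun k => ?_) hs.abs hsum.summable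
          rw [abs_mul, abs_of_nonneg (ha k), abs_pow]
          calc a k * |x| ^ k ≤ a k * 1 :=
                mul_le_mul_of_nonneg_left (pow_le_one₀ (abs_nonneg x) hx) (ha k)
            _ = a k := mul_one _
      _ = 1 := hsum.tsum_eq

/-- Depth needed for numerical indistinguishability: if `a₀ > 0` and
`0 < κ'(1) = ∑ k a_k < 1`, then after depth `ℓ ≥ ln(1/ε)/ln(1/κ'(1))` the kernel sequence
is within `ε |ρ₀ - 1|` of `1`. -/
theorem kernel_depth_numerical_indistinguishability
    (a : ℕ → ℝ) (ha : ∀ k, 0 ≤ a k) (hsum : HasSum a 1)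
    (h0 : 0 < a 0)
    (hd : Summable (fun k : ℕ => (k : ℝ) * a k))
    (hdpos : 0 < ∑' k : ℕ, (k : ℝ) * a k)
    (hd1 : (∑' k : ℕ, (k : ℝ) * a k) < 1)
    (ε : ℝ) (hε : ε ∈ Set.Ioo (0 : ℝ) 1)
    (ρ : ℕ → ℝ) (hρ0 : ρ 0 ∈ Set.Ioo (-1 : ℝ) 1)
    (hrec : ∀ ℓ, ρ (ℓ + 1) = kernelMap a (ρ ℓ)) :
    ∀ ℓ : ℕ, Real.log (1 / ε) / Real.log (1 / ∑' k : ℕ, (k : ℝ) * a k) ≤ ℓ →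
      |ρ ℓ - 1| ≤ ε * |ρ 0 - 1| := by
  set d : ℝ := ∑' k : ℕ, (k : ℝ) * a k with hdef
  have key : ∀ ℓ : ℕ, |ρ ℓ - 1| ≤ d ^ ℓ * |ρ 0 - 1| ∧ |ρ ℓ| ≤ 1 := by
    intro ℓ
    induction ℓ with
    | zero =>
      refine ⟨by simp, ?_⟩
      rw [abs_le]
      exact ⟨hρ0.1.le, hρ0.2.le⟩
    | succ n ih =>
      obtain ⟨ih1, ih2⟩ := ih
      have hk := key_step a ha hsum hd (ρ n) ih2
      rw [hrec n] at *
      refine ⟨?_, hk.2⟩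
      calc |kernelMap a (ρ n) - 1| ≤ d * |ρ n - 1| := hk.1
        _ ≤ d * (d ^ n * |ρ 0 - 1|) := mul_le_mul_of_nonneg_left ih1 hdpos.le
        _ = d ^ (n + 1) * |ρ 0 - 1| := by ring
  intro ℓ hℓ
  have hlogd : 0 < Real.log (1 / d) := Real.log_pos (one_lt_one_div hdpos hd1)
  have h1 : Real.log (1 / ε) ≤ ℓ * Real.log (1 / d) := by
    rw [div_le_iff₀ hlogd] at hℓ
    linarith
  have hpow : d ^ ℓ ≤ ε := by
    rw [Real.log_div one_ne_zero (ne_of_gt hε.1), Real.log_div one_ne_zero (ne_of_gt hdpos),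
      Real.log_one] at h1
    have h2 : Real.log (d ^ ℓ) ≤ Real.log ε := by
      rw [Real.log_pow]
      linarith
    exact (Real.log_le_log_iff (pow_pos hdpos ℓ) hε.1).mp h2
  calc |ρ ℓ - 1| ≤ d ^ ℓ * |ρ 0 - 1| := (key ℓ).1
    _ ≤ ε * |ρ 0 - 1| := mul_le_mul_of_nonneg_right hpow (abs_nonneg _)
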